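/- Let G ∈ ℝ^{d×n}, let V_k ∈ ℝ^{d×k} have orthonormal columns, S ∈ ℝ^{d×k} a selection matrix with SᵀV_k invertible, and let 𝕊 = V_k(SᵀV_k)⁻¹Sᵀ. Suppose G = V_k D_k Mᵀ + V̂ D̂ M̂ᵀ + E with V_kᵀV̂ = 0 and V̂ having orthonormal columns. Then (I − 𝕊)G = (I − 𝕊)(I − V_k V_kᵀ)G, and ‖(I − 𝕊)G‖₂ ≤ ‖I − 𝕊‖₂ · ‖(I − V_k V_kᵀ)G‖₂. -/

import Mathlib

open Matrix

/-- Spectral norm (operator 2-norm) of a real matrix. -/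
noncomputable def spec {m n : ℕ} (A : Matrix (Fin m) (Fin n) ℝ) : ℝ :=
  ‖LinearMap.toContinuousLinearMap (Matrix.toEuclideanLin A)‖

/-- A selection matrix: columns of the identity matrix indexed by distinct indices. -/
def IsSelection {m k : ℕ} (P : Matrix (Fin m) (Fin k) ℝ) : Prop :=
  ∃ p : Fin k → Fin m, Function.Injective p ∧
    P = Matrix.of fun i j => if i = p j then (1 : ℝ) else 0

lemma spec_mul_le {m n l : ℕ} (A : Matrix (Fin m) (Fin n) ℝ) (B : Matrix (Fin n) (Fin l) ℝ) :
    spec (A * B) ≤ spec A * spec B := by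
  have hmul : toEuclideanLin (A * B) = toEuclideanLin A ∘ₗ toEuclideanLin B :=
    toLpLin_mul_same _ _ _
  unfold spec
  rw [hmul]
  exact (LinearMap.toContinuousLinearMap (toEuclideanLin A)).opNorm_comp_le
    (LinearMap.toContinuousLinearMap (toEuclideanLin B))

namespace Matrix

variable {m k R : Type*} [Fintype m] [Fintype k]

lemma mul_nonsing_inv_mul_mul_cancel [DecidableEq k] [CommRing R]
    {A : Matrix m k R} {B : Matrix k m R} (h : IsUnit (B * A)) : A * (B * A)⁻¹ * B * A = A := by
  rw [Matrix.mul_assoc, Matrix.mul_assoc, nonsing_inv_mul _ ((isUnit_iff_isUnit_det _).mp h),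
    Matrix.mul_one]

lemma one_sub_mul_one_sub_mul_eq_of_mul_eq [DecidableEq m] [Ring R]
    {P : Matrix m m R} {V : Matrix m k R} (W : Matrix k m R) (h : P * V = V) :
    (1 - P) * (1 - V * W) = 1 - P := by
  have hV : (1 - P) * V = 0 := by rw [Matrix.sub_mul, Matrix.one_mul, h, sub_self]
  rw [Matrix.mul_sub, Matrix.mul_one, ← Matrix.mul_assoc, hV, Matrix.zero_mul, sub_zero]

end Matrix

theorem row_oblique_projector_factorization_general {d n k : ℕ}
    (G : Matrix (Fin d) (Fin n) ℝ)
    (Vk : Matrix (Fin d) (Fin k) ℝ)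
    (S : Matrix (Fin d) (Fin k) ℝ)
    (hinv : IsUnit (Sᵀ * Vk))
    (Sb : Matrix (Fin d) (Fin d) ℝ) (hSb : Sb = Vk * (Sᵀ * Vk)⁻¹ * Sᵀ) :
    (1 - Sb) * G = (1 - Sb) * (1 - Vk * Vkᵀ) * G ∧
    spec ((1 - Sb) * G) ≤ spec (1 - Sb) * spec ((1 - Vk * Vkᵀ) * G) := by
  have hSbVk : Sb * Vk = Vk := hSb ▸ mul_nonsing_inv_mul_mul_cancel hinv
  have heq : (1 - Sb) * G = (1 - Sb) * (1 - Vk * Vkᵀ) * G := by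
    rw [one_sub_mul_one_sub_mul_eq_of_mul_eq Vkᵀ hSbVk]
  refine ⟨heq, ?_⟩
  calc spec ((1 - Sb) * G) = spec ((1 - Sb) * ((1 - Vk * Vkᵀ) * G)) := by
        rw [heq, Matrix.mul_assoc]
    _ ≤ spec (1 - Sb) * spec ((1 - Vk * Vkᵀ) * G) := spec_mul_le _ _

/-- for the oblique projector 𝕊 = V_k (SᵀV_k)⁻¹ Sᵀ,
(I − 𝕊)G = (I − 𝕊)(I − V_k V_kᵀ)G and
‖(I − 𝕊)G‖₂ ≤ ‖I − 𝕊‖₂ · ‖(I − V_k V_kᵀ)G‖₂. -/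
theorem row_oblique_projector_factorization {d n k r : ℕ}
    (G : Matrix (Fin d) (Fin n) ℝ)
    (Vk : Matrix (Fin d) (Fin k) ℝ) (hVk : Vkᵀ * Vk = 1)
    (S : Matrix (Fin d) (Fin k) ℝ) (hS : IsSelection S)
    (hinv : IsUnit (Sᵀ * Vk))
    (Sb : Matrix (Fin d) (Fin d) ℝ) (hSb : Sb = Vk * (Sᵀ * Vk)⁻¹ * Sᵀ)
    -- the decomposition G = V_k D_k Mᵀ + V̂ D̂ M̂ᵀ + E
    (Dk : Matrix (Fin k) (Fin k) ℝ) (M : Matrix (Fin n) (Fin k) ℝ)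
    (Vhat : Matrix (Fin d) (Fin r) ℝ) (hVhat : Vhatᵀ * Vhat = 1)
    (hVkVhat : Vkᵀ * Vhat = 0)
    (Dhat : Matrix (Fin r) (Fin r) ℝ) (Mhat : Matrix (Fin n) (Fin r) ℝ)
    (E : Matrix (Fin d) (Fin n) ℝ)
    (hG : G = Vk * Dk * Mᵀ + Vhat * Dhat * Mhatᵀ + E) :
    (1 - Sb) * G = (1 - Sb) * (1 - Vk * Vkᵀ) * G ∧
    spec ((1 - Sb) * G) ≤ spec (1 - Sb) * spec ((1 - Vk * Vkᵀ) * G) :=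
  row_oblique_projector_factorization_general G Vk S hinv Sb hSb
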